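/- arXiv:2604.24495 — 6 statements merged into one kernel-verified Lean document; each statement's English description precedes it below -/
import Mathlib

section
/- Let k be a field of characteristic zero and let n ≥ 1 be an integer. Then there exists an injective group homomorphism from the symmetric group S_{n+2} into the projective general linear group PGL_{n+1}(k). Concretely, the permutation representation of S_{n+2} on k^{n+2} restricts to a faithful (n+1)-dimensional representation on the sum-zero hyperplane (the standard representation), and its projectivization S_{n+2} → PGL_{n+1}(k) is still injective. -/
/-!
The permutation representation of `S_m` on `k^m` preserves the sum-zero hyperplane `V`, of
dimension `m - 1`. A permutation acting on `V` as a scalar `c` is the identity once `m ≥ 3`: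
if `σ i ≠ i`, pick `l ∉ {i, σ i}`; the vector `e_i - e_l ∈ V` is sent to `e_{σ i} - e_{σ l}`,
whose `σ i`-coordinate is `1`, while that of `c • (e_i - e_l)` is `0`. Hence the projectivized
representation `S_m → PGL(V) ≅ PGL_{m-1}(k)` is injective.
-/

/-- `PGL n k` is the projective general linear group: the quotient of `GL n k`
by its center (the subgroup of nonzero scalar matrices). -/
abbrev PGL (n : ℕ) (k : Type*) [Field k] : Type _ :=
  GL (Fin n) k ⧸ Subgroup.center (GL (Fin n) k)

open Module Equiv

section Projectivization

variable {G m R V : Type*} [Group G] [Fintype m] [DecidableEq m] [CommRing R]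
  [AddCommGroup V] [Module R V]

lemma Matrix.GeneralLinearGroup.toLin'_scalar_apply (b : Basis m R V) (u : Rˣ) (v : V) :
    (toLin' b (scalar m u) : V →ₗ[R] V) v = (u : R) • v := by
  simpa [Fintype.linearCombination_apply] using toLin'_apply b (scalar m u) v

noncomputable def projectivization (b : Basis m R V) (ρ : G →* LinearMap.GeneralLinearGroup R V) :
    G →* GL m R ⧸ Subgroup.center (GL m R) :=
  (QuotientGroup.mk' _).comp ((Matrix.GeneralLinearGroup.toLin' b).symm.toMonoidHom.comp ρ)

lemma injective_projectivization (b : Basis m R V) (ρ : G →* LinearMap.GeneralLinearGroup R V)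
    (hρ : ∀ g (u : Rˣ), (∀ v, (ρ g : V →ₗ[R] V) v = (u : R) • v) → g = 1) :
    Function.Injective (projectivization b ρ) := by
  rw [injective_iff_map_eq_one]
  intro g hg
  obtain ⟨u, hu⟩ : (Matrix.GeneralLinearGroup.toLin' b).symm (ρ g) ∈
      (Matrix.GeneralLinearGroup.scalar m).range := by
    rwa [← Matrix.GeneralLinearGroup.center_eq_range_scalar, ← QuotientGroup.eq_one_iff]
  rw [MulEquiv.eq_symm_apply] at hu
  exact hρ g u fun v => by rw [← hu, Matrix.GeneralLinearGroup.toLin'_scalar_apply]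

end Projectivization

section StandardRepresentation

variable (k : Type*) [CommRing k] (ι : Type*)

def permRep : Representation k (Perm ι) (ι → k) where
  toFun σ := LinearMap.funLeft k k ⇑σ⁻¹
  map_one' := rfl
  map_mul' _ _ := rfl

@[simp]
lemma permRep_apply (σ : Perm ι) (x : ι → k) : permRep k ι σ x = x ∘ ⇑σ⁻¹ := rfl

variable [Fintype ι]

def sumZero : Submodule k (ι → k) := LinearMap.ker (∑ i, LinearMap.proj i)

variable {k ι}

lemma mem_sumZero {x : ι → k} : x ∈ sumZero k ι ↔ ∑ i, x i = 0 := by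
  simp [sumZero]

lemma sumZero_le_comap_permRep (σ : Perm ι) :
    sumZero k ι ≤ (sumZero k ι).comap (permRep k ι σ) := by
  intro x hx
  simpa [mem_sumZero, Equiv.sum_comp] using hx

variable (k ι)

def standardRep : Representation k (Perm ι) (sumZero k ι) :=
  (permRep k ι).subrepresentation (sumZero k ι) sumZero_le_comap_permRep

variable {k ι}

lemma eq_one_of_standardRep_eq_smul [Nontrivial k] (hι : 2 < Fintype.card ι) {σ : Perm ι}
    {c : k} (hσ : ∀ x, standardRep k ι σ x = c • x) : σ = 1 := by
  classical
  by_contra hne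
  obtain ⟨i, hi⟩ : ∃ i, σ i ≠ i := by
    by_contra! h
    exact hne (Equiv.ext h)
  obtain ⟨l, -, hl⟩ := Finset.exists_mem_notMem_of_card_lt_card
    (s := {i, σ i}) (t := Finset.univ) (Finset.card_le_two.trans_lt hι)
  rw [Finset.mem_insert, Finset.mem_singleton, not_or] at hl
  have hx : (Pi.single i 1 - Pi.single l 1 : ι → k) ∈ sumZero k ι := by
    simp [mem_sumZero, Finset.sum_sub_distrib]
  simpa [standardRep, hi, hl.1, hl.2] using
    congr_arg (fun x : sumZero k ι => (x : ι → k) (σ i)) (hσ ⟨_, hx⟩)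

end StandardRepresentation

lemma finrank_sumZero_add_one {K ι : Type*} [Field K] [Fintype ι] [Nonempty ι] :
    finrank K (sumZero K ι) + 1 = Fintype.card ι := by
  classical
  obtain ⟨i⟩ := ‹Nonempty ι›
  have hne : (∑ j, LinearMap.proj j : Module.Dual K (ι → K)) ≠ 0 := fun h => by
    simpa using LinearMap.congr_fun h (Pi.single i 1)
  rw [sumZero, Module.Dual.finrank_ker_add_one_of_ne_zero hne, finrank_fintype_fun_eq_card]

theorem stmt_1_general (k : Type*) [Field k] (n : ℕ) (hn : 1 ≤ n) :
    ∃ f : Equiv.Perm (Fin (n + 2)) →* PGL (n + 1) k, Function.Injective f := by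
  have hdim : finrank k (sumZero k (Fin (n + 2))) = n + 1 := by
    have := finrank_sumZero_add_one (K := k) (ι := Fin (n + 2))
    rw [Fintype.card_fin] at this
    omega
  refine ⟨_, injective_projectivization (finBasisOfFinrankEq k _ hdim)
    (standardRep k _).toHomUnits fun σ u hσ => ?_⟩
  exact eq_one_of_standardRep_eq_smul (by rw [Fintype.card_fin]; omega) hσ

/-- Let `k` be a field of characteristic zero and `n ≥ 1`. Then there exists an
injective group homomorphism from the symmetric group `S_{n+2}` into `PGL_{n+1}(k)`
(coming from the standard representation of `S_{n+2}` on the sum-zero hyperplane). -/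
theorem stmt_1 (k : Type*) [Field k] [CharZero k] (n : ℕ) (hn : 1 ≤ n) :
    ∃ f : Equiv.Perm (Fin (n + 2)) →* PGL (n + 1) k, Function.Injective f :=
  stmt_1_general k n hn
end

section
/- Let k be a field of characteristic zero in which the equation a² + b² = −1 has no solution with a, b ∈ k. Then there is no injective group homomorphism from the alternating group A₄ into PGL₂(k). -/
/-!
Lift the Klein four-group `{1, x, y, xy}` of `A₄` to matrices `A`, `B`, `AB` in `GL₂(k)`.
By Cayley–Hamilton, a non-scalar `2 × 2` matrix with scalar square has trace zero, so `A`, `B`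
and `AB` are traceless. The determinant of a lift is well defined up to squares and invariant
under conjugation; as `x`, `y`, `xy` are conjugate in `A₄`, this gives
`det A ≡ det B ≡ det A · det B`, so `det A = α²` and `det B = β²`. Then `i = A / α` and
`j = B / β` satisfy `i² = j² = -1` and `ij = -ji`: the quaternion algebra `(-1, -1)` embeds
in `M₂(k)`, i.e. it is split, and that happens only if `-1` is a sum of two squares.
-/

theorem exists_sq_add_sq_eq_neg_one_of_sq_add_sq_eq_neg_sq {k : Type*} [Field k] {x y z : k}
    (hz : z ≠ 0) (h : x ^ 2 + y ^ 2 = -z ^ 2) : ∃ a b : k, a ^ 2 + b ^ 2 = -1 :=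
  ⟨x / z, y / z, by field_simp; linear_combination h⟩

namespace Matrix

theorem mul_self_eq_trace_smul_sub_det_smul_one {R : Type*} [CommRing R]
    (A : Matrix (Fin 2) (Fin 2) R) : A * A = A.trace • A - A.det • 1 := by
  ext i j
  fin_cases i <;> fin_cases j <;>
    simp only [Fin.zero_eta, Fin.mk_one, mul_apply, Fin.sum_univ_two, trace_fin_two,
      det_fin_two, Matrix.sub_apply, Matrix.smul_apply, smul_eq_mul, one_apply_eq, one_apply_ne,
      ne_eq, zero_ne_one, one_ne_zero, not_false_eq_true] <;> ring

variable {k : Type*} [Field k]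

theorem exists_sq_add_sq_eq_neg_one_of_trace_eq_zero {A B : Matrix (Fin 2) (Fin 2) k}
    (hA : A.trace = 0) (hB : B.trace = 0) (hAB : (A * B).trace = 0) {α β : k}
    (hα : α ≠ 0) (hβ : β ≠ 0) (hdetA : A.det = α ^ 2) (hdetB : B.det = β ^ 2) :
    ∃ a b : k, a ^ 2 + b ^ 2 = -1 := by
  rw [trace_fin_two, add_eq_zero_iff_eq_neg'] at hA hB
  rw [trace_fin_two, mul_apply, mul_apply, Fin.sum_univ_two, Fin.sum_univ_two, hA, hB] at hAB
  rw [det_fin_two, hA] at hdetA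
  rw [det_fin_two, hB] at hdetB
  by_cases hc : A 1 0 = 0
  · exact exists_sq_add_sq_eq_neg_one_of_sq_add_sq_eq_neg_sq (y := 0) hα
      (by linear_combination -hdetA - A 0 1 * hc)
  · exact exists_sq_add_sq_eq_neg_one_of_sq_add_sq_eq_neg_sq (mul_ne_zero hc hβ)
      (x := A 1 0 * B 0 0 - A 0 0 * B 1 0) (y := α * B 1 0)
      (by linear_combination -(B 1 0) ^ 2 * hdetA - (A 1 0) ^ 2 * hdetB - A 1 0 * B 1 0 * hAB)

open GeneralLinearGroup

theorem trace_eq_zero_of_mk_sq_eq_one {g : GL (Fin 2) k} (hg : (g : PGL 2 k) ≠ 1)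
    (hg2 : (g : PGL 2 k) ^ 2 = 1) : (g : Matrix (Fin 2) (Fin 2) k).trace = 0 := by
  rw [← QuotientGroup.mk_pow, QuotientGroup.eq_one_iff,
    mem_center_iff_val_mem_range_scalar] at hg2
  rw [Ne, QuotientGroup.eq_one_iff, mem_center_iff_val_mem_range_scalar] at hg
  obtain ⟨c, hc⟩ := hg2
  by_contra htr
  refine hg ⟨g.val.trace⁻¹ * (c + g.val.det), ?_⟩
  have hCH := mul_self_eq_trace_smul_sub_det_smul_one g.val
  rw [← Units.val_mul, ← sq, ← hc, scalar_apply, ← smul_one_eq_diagonal] at hCH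
  have hsmul : g.val.trace • g.val = (c + g.val.det) • 1 := by rw [add_smul, hCH]; abel
  rw [scalar_apply, ← smul_one_eq_diagonal, mul_smul, ← hsmul, smul_smul, inv_mul_cancel₀ htr,
    one_smul]

theorem exists_det_eq_pow_mul_of_isConj {n : ℕ} {g h : GL (Fin n) k}
    (hgh : IsConj (g : PGL n k) h) :
    ∃ c : k, c ≠ 0 ∧ h.val.det = c ^ n * g.val.det := by
  obtain ⟨v, hv⟩ := isConj_iff.mp hgh
  obtain ⟨S, rfl⟩ := QuotientGroup.mk_surjective v
  rw [← QuotientGroup.mk_inv, ← QuotientGroup.mk_mul, ← QuotientGroup.mk_mul] at hv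
  obtain ⟨u, rfl⟩ := ProjGenLinGroup.mk_eq_mk_iff.mp hv
  refine ⟨u, u.ne_zero, ?_⟩
  simp only [Units.val_mul, coe_units_inv, coe_scalar, scalar_apply, det_mul, det_nonsing_inv,
    Ring.inverse_eq_inv', det_diagonal, Finset.prod_const, Finset.card_univ, Fintype.card_fin]
  field_simp [S.det_ne_zero]

end Matrix

open Matrix in
theorem exists_sq_add_sq_eq_neg_one_of_isConj {k : Type*} [Field k] {u w : PGL 2 k}
    (hu : u ≠ 1) (hu2 : u ^ 2 = 1) (huw : IsConj u w) (huuw : IsConj u (u * w)) :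
    ∃ a b : k, a ^ 2 + b ^ 2 = -1 := by
  obtain ⟨A, rfl⟩ := QuotientGroup.mk_surjective u
  obtain ⟨B, rfl⟩ := QuotientGroup.mk_surjective w
  rw [← QuotientGroup.mk_mul] at huuw
  have trace_eq_zero {g : GL (Fin 2) k} (hg : IsConj (A : PGL 2 k) g) : g.val.trace = 0 :=
    trace_eq_zero_of_mk_sq_eq_one (fun h1 ↦ hu (isConj_one_left.mp (h1 ▸ hg)))
      (isConj_one_right.mp (hu2 ▸ hg.pow 2))
  obtain ⟨c, hc, hdetB⟩ := exists_det_eq_pow_mul_of_isConj huw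
  obtain ⟨d, hd, hdetAB⟩ := exists_det_eq_pow_mul_of_isConj huuw
  rw [Units.val_mul, det_mul, mul_comm, mul_left_inj' A.det_ne_zero] at hdetAB
  have hdetA : A.val.det = (d / c) ^ 2 := by
    rw [div_pow, ← hdetAB, hdetB, mul_div_cancel_left₀ _ (pow_ne_zero 2 hc)]
  refine exists_sq_add_sq_eq_neg_one_of_trace_eq_zero (trace_eq_zero (IsConj.refl _))
    (trace_eq_zero huw) ?_ (div_ne_zero hd hc) hd hdetA hdetAB
  rw [← Units.val_mul]
  exact trace_eq_zero huuw

open Equiv.Perm in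
theorem exists_isConj_mul_of_alternatingGroup_fin_four :
    ∃ x y : alternatingGroup (Fin 4), x ≠ 1 ∧ x ^ 2 = 1 ∧ IsConj x y ∧ IsConj x (x * y) :=
  ⟨⟨c[0, 1] * c[2, 3], mem_alternatingGroup.mpr (by decide)⟩,
    ⟨c[0, 2] * c[1, 3], mem_alternatingGroup.mpr (by decide)⟩, by decide, by decide,
    isConj_iff.mpr ⟨⟨c[0, 2, 1], mem_alternatingGroup.mpr (by decide)⟩, by decide⟩,
    isConj_iff.mpr ⟨⟨c[0, 1, 2], mem_alternatingGroup.mpr (by decide)⟩, by decide⟩⟩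

theorem stmt_3_general (k : Type*) [Field k]
    (h : ¬ ∃ a b : k, a ^ 2 + b ^ 2 = -1) :
    ¬ ∃ f : alternatingGroup (Fin 4) →* PGL 2 k, Function.Injective f := by
  rintro ⟨f, hf⟩
  obtain ⟨x, y, hx, hx2, hxy, hxxy⟩ := exists_isConj_mul_of_alternatingGroup_fin_four
  refine h (exists_sq_add_sq_eq_neg_one_of_isConj ((map_ne_one_iff f hf).mpr hx)
    (by rw [← map_pow, hx2, map_one]) (f.map_isConj hxy) ?_)
  rw [← map_mul]
  exact f.map_isConj hxxy

/-- Let `k` be a field of characteristic zero in which `a² + b² = −1` has no solution.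
Then there is no injective group homomorphism from the alternating group `A₄` into
`PGL₂(k)`. -/
theorem stmt_3 (k : Type*) [Field k] [CharZero k]
    (h : ¬ ∃ a b : k, a ^ 2 + b ^ 2 = -1) :
    ¬ ∃ f : alternatingGroup (Fin 4) →* PGL 2 k, Function.Injective f :=
  stmt_3_general k h
end

section
/- Let k be a field of characteristic zero and let M ∈ GL₂(k) be an invertible 2×2 matrix over k which is not a scalar multiple of the identity, but such that M⁵ is a scalar multiple of the identity. Then 5 is a square in k. -/
open Matrix

lemma cayley_two {k : Type*} [Field k] (A : Matrix (Fin 2) (Fin 2) k) :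
    A ^ 2 = A.trace • A - A.det • 1 := by
  ext i j
  fin_cases i <;> fin_cases j <;>
    simp [pow_two, Matrix.mul_apply, Matrix.trace_fin_two, Matrix.det_fin_two,
      Fin.sum_univ_two, Matrix.one_apply] <;> ring

/-- Let `k` be a field of characteristic zero and `M ∈ GL₂(k)` an invertible matrix that
is not a scalar multiple of the identity, but such that `M⁵` is a scalar multiple of the
identity. Then `5` is a square in `k`. -/
theorem stmt_6 (k : Type*) [Field k] [CharZero k] (M : GL (Fin 2) k)
    (hM : ¬ ∃ c : k, (M : Matrix (Fin 2) (Fin 2) k) = c • (1 : Matrix (Fin 2) (Fin 2) k))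
    (hM5 : ∃ c : k, ((M ^ 5 : GL (Fin 2) k) : Matrix (Fin 2) (Fin 2) k)
      = c • (1 : Matrix (Fin 2) (Fin 2) k)) :
    ∃ s : k, s ^ 2 = 5 := by
  obtain ⟨c, hc⟩ := hM5
  set A : Matrix (Fin 2) (Fin 2) k := (M : Matrix (Fin 2) (Fin 2) k) with hA
  set t : k := A.trace with ht
  set d : k := A.det with hd
  have h2 : A ^ 2 = t • A - d • 1 := cayley_two A
  have h3 : A ^ 3 = (t ^ 2 - d) • A - (d * t) • 1 := by
    have e : A ^ 3 = A ^ 2 * A := by rw [pow_succ]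
    rw [e, h2, sub_mul, smul_mul_assoc, smul_mul_assoc, one_mul, ← pow_two, h2]
    module
  have h4 : A ^ 4 = (t ^ 3 - 2 * d * t) • A - (d * (t ^ 2 - d)) • 1 := by
    have e : A ^ 4 = A ^ 3 * A := by rw [pow_succ]
    rw [e, h3, sub_mul, smul_mul_assoc, smul_mul_assoc, one_mul, ← pow_two, h2]
    module
  have h5 : A ^ 5 = (t ^ 4 - 3 * d * t ^ 2 + d ^ 2) • A - (d * (t ^ 3 - 2 * d * t)) • 1 := by
    have e : A ^ 5 = A ^ 4 * A := by rw [pow_succ]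
    rw [e, h4, sub_mul, smul_mul_assoc, smul_mul_assoc, one_mul, ← pow_two, h2]
    module
  have hA5 : A ^ 5 = c • 1 := by
    rw [hA, ← Units.val_pow_eq_pow_val]; exact hc
  have hd0 : d ≠ 0 := by
    have : IsUnit A := ⟨M, rfl⟩
    exact ((Matrix.isUnit_iff_isUnit_det A).mp this).ne_zero
  have hp : t ^ 4 - 3 * d * t ^ 2 + d ^ 2 = 0 := by
    by_contra hp
    apply hM
    refine ⟨(t ^ 4 - 3 * d * t ^ 2 + d ^ 2)⁻¹ * (c + d * (t ^ 3 - 2 * d * t)), ?_⟩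
    have := h5.symm.trans hA5
    have hAeq : (t ^ 4 - 3 * d * t ^ 2 + d ^ 2) • A
        = (c + d * (t ^ 3 - 2 * d * t)) • (1 : Matrix (Fin 2) (Fin 2) k) := by
      have := sub_eq_iff_eq_add.mp this
      rw [this]; module
    calc A = (t ^ 4 - 3 * d * t ^ 2 + d ^ 2)⁻¹ •
        ((t ^ 4 - 3 * d * t ^ 2 + d ^ 2) • A) := by
          rw [smul_smul, inv_mul_cancel₀ hp, one_smul]
      _ = _ := by rw [hAeq, smul_smul]
  have ht0 : t ≠ 0 := by
    intro h
    rw [h] at hp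
    simp only [ne_eq] at hd0
    apply hd0
    have : d ^ 2 = 0 := by linear_combination hp
    exact pow_eq_zero_iff (n := 2) (by norm_num) |>.mp this
  refine ⟨(2 * d - 3 * t ^ 2) / t ^ 2, ?_⟩
  field_simp
  linear_combination 4 * hp
end

section
/- Let k be a field of characteristic zero. If there exists an injective group homomorphism from the alternating group A₅ into PGL₂(k), then 5 is a square in k. -/
section aux

variable {k : Type*} [Field k]

/-- Cayley–Hamilton consequence: explicit formula for the fifth power of a `2×2` matrix. -/
lemma matrix_pow_five (M : Matrix (Fin 2) (Fin 2) k) :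
    M ^ 5 = (Matrix.trace M ^ 4 - 3 * M.det * Matrix.trace M ^ 2 + M.det ^ 2) • M
      + (-(M.det * Matrix.trace M ^ 3) + 2 * M.det ^ 2 * Matrix.trace M) •
        (1 : Matrix (Fin 2) (Fin 2) k) := by
  ext i j
  fin_cases i <;> fin_cases j <;>
    simp [pow_succ, Matrix.mul_apply, Fin.sum_univ_two, Matrix.det_fin_two,
      Matrix.trace_fin_two, Matrix.one_apply] <;> ring

/-- Scalar matrices are central in `GL₂`. -/
lemma scalar_mem_center (r : k) (u : GL (Fin 2) k)
    (hu : (u : Matrix (Fin 2) (Fin 2) k) = r • 1) :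
    u ∈ Subgroup.center (GL (Fin 2) k) := by
  rw [Subgroup.mem_center_iff]
  intro g
  ext : 1
  push_cast [hu]
  rw [Matrix.mul_smul, Matrix.smul_mul, Matrix.mul_one, Matrix.one_mul]

/-- Central elements of `GL₂` are scalar matrices. -/
lemma center_scalar (u : GL (Fin 2) k) (hu : u ∈ Subgroup.center (GL (Fin 2) k)) :
    ∃ r : k, (u : Matrix (Fin 2) (Fin 2) k) = r • 1 := by
  rw [Subgroup.mem_center_iff] at hu
  set A : Matrix (Fin 2) (Fin 2) k := (u : Matrix (Fin 2) (Fin 2) k) with hA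
  let T1 : GL (Fin 2) k := ⟨!![1, 1; 0, 1], !![1, -1; 0, 1],
    by norm_num [Matrix.mul_fin_two]; exact Matrix.one_fin_two.symm,
    by norm_num [Matrix.mul_fin_two]; exact Matrix.one_fin_two.symm⟩
  let T2 : GL (Fin 2) k := ⟨!![1, 0; 1, 1], !![1, 0; -1, 1],
    by norm_num [Matrix.mul_fin_two]; exact Matrix.one_fin_two.symm,
    by norm_num [Matrix.mul_fin_two]; exact Matrix.one_fin_two.symm⟩
  have h1 : !![1, 1; 0, 1] * A = A * !![1, 1; 0, 1] := congrArg Units.val (hu T1)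
  have h2 : !![1, 0; 1, 1] * A = A * !![1, 0; 1, 1] := congrArg Units.val (hu T2)
  have e1 := congrFun (congrFun h1 0) 0
  have e2 := congrFun (congrFun h1 0) 1
  have e3 := congrFun (congrFun h2 1) 1
  simp [Matrix.mul_apply, Fin.sum_univ_two] at e1 e2 e3
  refine ⟨A 0 0, ?_⟩
  ext i j
  fin_cases i <;> fin_cases j <;> simp [Matrix.one_apply]
  · exact e3
  · exact e1
  · linear_combination e2

end aux

/-- Let `k` be a field of characteristic zero. If there exists an injective group
homomorphism from the alternating group `A₅` into `PGL₂(k)`, then `5` is a square in `k`. -/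
theorem stmt_7 (k : Type*) [Field k] [CharZero k]
    (h : ∃ f : alternatingGroup (Fin 5) →* PGL 2 k, Function.Injective f) :
    ∃ s : k, s ^ 2 = 5 := by
  obtain ⟨f, hf⟩ := h
  -- a nontrivial element of order dividing 5
  have hmem : finRotate 5 ∈ alternatingGroup (Fin 5) := by
    rw [Equiv.Perm.mem_alternatingGroup]; decide
  set σ : alternatingGroup (Fin 5) := ⟨finRotate 5, hmem⟩ with hσ
  have hσ5 : σ ^ 5 = 1 := by
    apply Subtype.ext
    show (finRotate 5 : Equiv.Perm (Fin 5)) ^ 5 = 1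
    decide
  have hσne : σ ≠ 1 := by
    intro hc
    have : (finRotate 5 : Equiv.Perm (Fin 5)) = 1 := congrArg Subtype.val hc
    exact absurd this (by decide)
  -- its image in PGL₂
  have hq5 : (f σ) ^ 5 = 1 := by rw [← map_pow, hσ5, map_one]
  have hqne : f σ ≠ 1 := by
    intro hc
    exact hσne (hf (by rw [hc, map_one]))
  obtain ⟨g, hg⟩ := QuotientGroup.mk_surjective (f σ)
  -- g^5 is central
  have hg5c : g ^ 5 ∈ Subgroup.center (GL (Fin 2) k) := by
    rw [← QuotientGroup.eq_one_iff, QuotientGroup.mk_pow, hg, hq5]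
  -- g itself is not central
  have hgnc : g ∉ Subgroup.center (GL (Fin 2) k) := by
    intro hc
    exact hqne (by rw [← hg, QuotientGroup.eq_one_iff]; exact hc)
  obtain ⟨c, hc⟩ := center_scalar (g ^ 5) hg5c
  set M : Matrix (Fin 2) (Fin 2) k := (g : Matrix (Fin 2) (Fin 2) k) with hM
  have hMc : M ^ 5 = c • (1 : Matrix (Fin 2) (Fin 2) k) := by
    rw [hM, ← Units.val_pow_eq_pow_val]; exact hc
  set T : k := Matrix.trace M with hT
  set D : k := M.det with hD
  have key : M ^ 5 = (T ^ 4 - 3 * D * T ^ 2 + D ^ 2) • M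
      + (-(D * T ^ 3) + 2 * D ^ 2 * T) • (1 : Matrix (Fin 2) (Fin 2) k) :=
    matrix_pow_five M
  set a : k := T ^ 4 - 3 * D * T ^ 2 + D ^ 2 with ha
  set b : k := -(D * T ^ 3) + 2 * D ^ 2 * T with hb
  have heq : a • M = (c - b) • (1 : Matrix (Fin 2) (Fin 2) k) := by
    have := key.symm.trans hMc
    rw [sub_smul]
    rw [← this]
    abel
  have ha0 : a = 0 := by
    by_contra ha0
    apply hgnc
    apply scalar_mem_center (a⁻¹ * (c - b)) g
    have : M = (a⁻¹ * (c - b)) • (1 : Matrix (Fin 2) (Fin 2) k) := by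
      rw [mul_smul, ← heq, ← mul_smul, inv_mul_cancel₀ ha0, one_smul]
    exact this
  have hD0 : D ≠ 0 := by
    have : IsUnit D := Matrix.isUnits_det_units g
    exact this.ne_zero
  refine ⟨(2 * T ^ 2 - 3 * D) / D, ?_⟩
  rw [div_pow, div_eq_iff (pow_ne_zero 2 hD0)]
  linear_combination 4 * ha0
end

section
/- Let Γ be a group and let z ∈ Γ be an element with z ≠ 1 and z² = 1 which lies in the commutator subgroup of Γ. Let m be an odd integer, let ρ : Γ → GL₄(ℂ) be an injective group homomorphism, and let τ : Γ → ℂˣ be a group homomorphism. Then there is no t ∈ ℂˣ such that ρ(z) = t·I₄ and τ(z) = t^m. (This is the key obstruction showing that for odd m, the product representation ρ × τ cannot induce an injection of S₆ into (GL₄(ℂ) × ℂˣ)/{(t·I₄, t^m)}.) -/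
/-- Let `Γ` be a group and `z ∈ Γ` with `z ≠ 1`, `z² = 1`, lying in the commutator
subgroup of `Γ`. Let `m` be an odd integer, `ρ : Γ → GL₄(ℂ)` an injective homomorphism
and `τ : Γ → ℂˣ` a homomorphism. Then there is no `t ∈ ℂˣ` with `ρ(z) = t·I₄` and
`τ(z) = t^m`. -/
theorem stmt_9 (Γ : Type*) [Group Γ] (z : Γ)
    (hz : z ∈ commutator Γ) (hz1 : z ≠ 1) (hz2 : z ^ 2 = 1)
    (m : ℤ) (hm : Odd m)
    (ρ : Γ →* GL (Fin 4) ℂ) (hρ : Function.Injective ρ)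
    (τ : Γ →* ℂˣ) :
    ¬ ∃ t : ℂˣ, (ρ z : Matrix (Fin 4) (Fin 4) ℂ)
        = (t : ℂ) • (1 : Matrix (Fin 4) (Fin 4) ℂ) ∧ τ z = t ^ m := by
  rintro ⟨t, hρz, hτz⟩
  -- τ kills the commutator subgroup since ℂˣ is abelian
  have hτ1 : τ z = 1 := by
    have := Abelianization.commutator_subset_ker τ hz
    simpa [MonoidHom.mem_ker] using this
  have htm : t ^ m = 1 := by rw [← hτz, hτ1]
  -- t² = 1 from z² = 1
  have hz2' : (ρ z : Matrix (Fin 4) (Fin 4) ℂ) ^ 2 = 1 := by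
    have : ρ z ^ 2 = 1 := by rw [← map_pow, hz2, map_one]
    have := congrArg (Units.val) this
    simpa using this
  have ht2c : (t : ℂ) ^ 2 = 1 := by
    rw [hρz, smul_pow, one_pow] at hz2'
    have := congrFun (congrFun hz2' 0) 0
    simpa [Matrix.one_apply, Matrix.smul_apply] using this
  have ht2 : t ^ 2 = 1 := Units.ext (by simpa using ht2c)
  -- m odd ⇒ t^m = t
  obtain ⟨k, hk⟩ := hm
  have ht1 : t = 1 := by
    have : t ^ m = (t ^ 2) ^ k * t := by
      rw [hk, zpow_add, zpow_one, zpow_mul, zpow_ofNat]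
    rw [ht2, one_zpow, one_mul] at this
    rw [← this, htm]
  rw [ht1] at hρz
  have hρ1 : ρ z = 1 := Units.ext (by simpa using hρz)
  exact hz1 (hρ (by rw [hρ1, map_one]))
end

section
/- Let k be a field of characteristic zero. Then there is no injective group homomorphism from the symmetric group S₅ into PGL₂(k). -/
open Matrix

/-- A central element of `GL n k` is a scalar matrix. -/
lemma center_is_scalar {n : Type*} [DecidableEq n] [Fintype n] {k : Type*} [Field k]
    {U : GL n k} (hU : U ∈ Subgroup.center (GL n k)) :
    ∃ c : k, (U : Matrix n n k) = c • (1 : Matrix n n k) := by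
  rw [Subgroup.mem_center_iff] at hU
  have hcomm : ∀ t : Matrix.TransvectionStruct n k, Commute t.toMatrix (U : Matrix n n k) := by
    intro t
    let g : GL n k := ⟨t.toMatrix, t.inv.toMatrix, t.mul_inv, t.inv_mul⟩
    have := hU g
    have := congrArg Units.val this
    simpa [g, Units.val_mul, Commute, SemiconjBy] using this
  obtain ⟨c, hc⟩ := Matrix.mem_range_scalar_of_commute_transvectionStruct hcomm
  refine ⟨c, ?_⟩
  rw [← hc]
  rw [Matrix.scalar_apply]
  ext i j
  simp [Matrix.diagonal, Matrix.one_apply, Pi.algebraMap_apply]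


lemma key {k : Type*} [Field k] [CharZero k] (x y : PGL 2 k)
    (h5 : x ^ 5 = 1) (hx : x ≠ 1) (hconj : y * x * y⁻¹ = x ^ 2) : False := by
  obtain ⟨A, rfl⟩ := QuotientGroup.mk'_surjective (Subgroup.center (GL (Fin 2) k)) x
  obtain ⟨B, rfl⟩ := QuotientGroup.mk'_surjective (Subgroup.center (GL (Fin 2) k)) y
  set M : Matrix (Fin 2) (Fin 2) k := (A : Matrix (Fin 2) (Fin 2) k) with hM
  set t : k := Matrix.trace M with ht
  set D : k := Matrix.det M with hD
  have hDunit : IsUnit D := (Matrix.isUnit_iff_isUnit_det M).mp A.isUnit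
  have hD0 : D ≠ 0 := hDunit.ne_zero
  -- Cayley–Hamilton for 2×2
  have hCH : M * M = t • M - D • (1 : Matrix (Fin 2) (Fin 2) k) := by
    ext i j
    fin_cases i <;> fin_cases j <;>
      simp [Matrix.mul_apply, Fin.sum_univ_two, ht, hD, Matrix.trace_fin_two,
        Matrix.det_fin_two, Matrix.one_apply] <;> ring
  -- A^5 is central, hence scalar
  have h5' : A ^ 5 ∈ Subgroup.center (GL (Fin 2) k) := by
    refine (QuotientGroup.eq_one_iff _).mp ?_
    have : (QuotientGroup.mk' (Subgroup.center (GL (Fin 2) k))) (A ^ 5) = 1 := by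
      rw [map_pow]; exact h5
    exact this
  obtain ⟨d, hd⟩ := center_is_scalar h5'
  have hd' : M ^ 5 = d • (1 : Matrix (Fin 2) (Fin 2) k) := by
    rw [← hd, hM, ← Units.val_pow_eq_pow_val]
  have h2 : M ^ 2 = t • M - D • 1 := by rw [pow_two]; exact hCH
  have h3 : M ^ 3 = (t^2 - D) • M - (t*D) • 1 := by
    rw [pow_succ, h2, sub_mul, smul_mul_assoc, smul_mul_assoc, one_mul, ← pow_two, h2]
    module
  have h5M : M ^ 5 = (t^4 - 3*t^2*D + D^2) • M - (D*t^3 - 2*t*D^2) • 1 := by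
    have e : M ^ 5 = M ^ 3 * M ^ 2 := by rw [← pow_add]
    rw [e, h3, h2]
    rw [sub_mul, smul_mul_assoc, smul_mul_assoc, one_mul, mul_sub, mul_smul_comm,
      mul_smul_comm, mul_one, ← pow_two, h2]
    module
  -- the coefficient of M in M^5 must vanish, else M is scalar, hence x = 1
  have hc5 : t^4 - 3*t^2*D + D^2 = 0 := by
    by_contra hne
    have hlin : (t^4 - 3*t^2*D + D^2) • M
        = (d + (D*t^3 - 2*t*D^2)) • (1 : Matrix (Fin 2) (Fin 2) k) := by
      have h := hd'.symm.trans h5M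
      rw [eq_sub_iff_add_eq] at h
      linear_combination (norm := module) h.symm
    have hMs : M = ((d + (D*t^3 - 2*t*D^2)) / (t^4 - 3*t^2*D + D^2)) • 1 := by
      calc M = ((t^4 - 3*t^2*D + D^2)⁻¹ * (t^4 - 3*t^2*D + D^2)) • M := by
              rw [inv_mul_cancel₀ hne, one_smul]
        _ = _ := by
              rw [mul_smul, hlin, div_eq_inv_mul, mul_smul]
    have hcen : A ∈ Subgroup.center (GL (Fin 2) k) := by
      rw [Subgroup.mem_center_iff]
      intro g
      refine Units.ext ?_
      rw [Units.val_mul, Units.val_mul, ← hM, hMs]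
      simp [Matrix.mul_smul, Matrix.smul_mul]
    exact hx ((QuotientGroup.eq_one_iff A).mpr hcen)
  -- conjugacy relation at the matrix level
  have hrel : (QuotientGroup.mk' (Subgroup.center (GL (Fin 2) k))) (B * A * B⁻¹)
      = (QuotientGroup.mk' (Subgroup.center (GL (Fin 2) k))) (A ^ 2) := by
    rw [_root_.map_mul, _root_.map_mul, _root_.map_inv, _root_.map_pow]; exact hconj
  rw [QuotientGroup.mk'_eq_mk'] at hrel
  obtain ⟨z, hz, hzeq⟩ := hrel
  obtain ⟨c, hc⟩ := center_is_scalar hz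
  have hmat : ((B : Matrix (Fin 2) (Fin 2) k) * M * ((B⁻¹ : GL (Fin 2) k) : Matrix (Fin 2) (Fin 2) k))
      * (c • (1 : Matrix (Fin 2) (Fin 2) k)) = M ^ 2 := by
    have h0 := congrArg Units.val hzeq
    simp only [Units.val_mul, Units.val_pow_eq_pow_val] at h0
    rw [← hc, hM]; exact h0
  have htr : c * t = t^2 - 2*D := by
    have h1 := congrArg Matrix.trace hmat
    rw [Matrix.mul_smul, mul_one, Matrix.trace_smul, Matrix.trace_units_conj, h2] at h1
    simp only [Matrix.trace_sub, Matrix.trace_smul, Matrix.trace_one, ← ht, smul_eq_mul] at h1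
    rw [h1]; push_cast [Fintype.card_fin]; ring
  have hdet : c^2 * D = D^2 := by
    have h1 := congrArg Matrix.det hmat
    rw [Matrix.mul_smul, mul_one, Matrix.det_smul, Matrix.det_units_conj] at h1
    simpa [← hD, pow_two, Fintype.card_fin] using h1
  -- c^2 = D, hence t^2 * D = (t^2 - 2D)^2
  have hc2 : c^2 = D := mul_right_cancel₀ hD0 (by linear_combination hdet)
  have hE1 : t^2 * D = (t^2 - 2*D)^2 := by
    have := congrArg (· ^ 2) htr
    simp only [mul_pow] at this
    rw [hc2] at this
    linear_combination this
  have h5D : (5:k) * D^3 = 0 := by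
    linear_combination (2*t^2 - 3*D) * (hc5 - (by linear_combination -hE1 :
      t^4 - 5*t^2*D + 4*D^2 = 0)) - 4*D*hc5
  have : D^3 = 0 := by
    rcases mul_eq_zero.mp h5D with h | h
    · exact absurd h (by norm_num)
    · exact h
  exact hD0 ((pow_eq_zero_iff (Nat.succ_ne_zero 2)).mp this)

/-- The 5-cycle `(0 1 2 3 4)` in `S₅`. -/
def sig : Equiv.Perm (Fin 5) := ⟨![1,2,3,4,0], ![4,0,1,2,3], by decide, by decide⟩

/-- The 4-cycle `(1 2 4 3)`, i.e. multiplication by 2 mod 5; it conjugates `sig` to `sig ^ 2`. -/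
def tau : Equiv.Perm (Fin 5) := ⟨![0,2,4,1,3], ![0,3,1,4,2], by decide, by decide⟩

/-- Let `k` be a field of characteristic zero. Then there is no injective group
homomorphism from the symmetric group `S₅` into `PGL₂(k)`. -/
theorem stmt_13 (k : Type*) [Field k] [CharZero k] :
    ¬ ∃ f : Equiv.Perm (Fin 5) →* PGL 2 k, Function.Injective f := by
  rintro ⟨f, hf⟩
  refine key (f sig) (f tau) ?_ ?_ ?_
  · rw [← map_pow, (by decide : sig ^ 5 = 1), _root_.map_one]
  · intro h
    apply (by decide : sig ≠ 1)
    apply hf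
    rw [h, _root_.map_one]
  · rw [← map_pow, ← _root_.map_inv, ← _root_.map_mul, ← _root_.map_mul,
      (by decide : tau * sig * tau⁻¹ = sig ^ 2)]
end
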